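/- Any finite product G_{k₁}·G_{k₂}·…·G_{k_N} of matrices from the family {G₁,...,G₁₂} has all entries bounded in absolute value by a constant C independent of N and of the choice of factors; in particular, the family {G_n} is product-bounded (neutrally stable). -/
import Mathlib


def G : Fin 12 → Matrix (Fin 3) (Fin 3) ℝ :=
  ![!![0,0,-1; 0,1,0; 0,0,1],
    !![1,0,0; 1,1,1; -1,0,0],
    !![0,0,0; 0,1,0; 0,0,1],
    !![0,0,0; 0,1,0; 1,0,1],
    !![1,0,0; 0,1,1; 0,0,0],
    !![1,0,1; 0,1,0; 0,0,0],
    !![0,-1,-1; 0,1,0; 0,0,1],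
    !![1,0,0; -1,0,-1; 0,0,1],
    !![1,0,0; 0,0,0; 0,1,1],
    !![1,0,0; 0,0,0; 0,0,1],
    !![1,1,1; 0,1,0; 0,-1,0],
    !![1,0,0; 0,0,-1; 0,0,1]]

/-- Integer version of the family `G`. -/
def Gz : Fin 12 → Matrix (Fin 3) (Fin 3) ℤ :=
  ![!![0,0,-1; 0,1,0; 0,0,1],
    !![1,0,0; 1,1,1; -1,0,0],
    !![0,0,0; 0,1,0; 0,0,1],
    !![0,0,0; 0,1,0; 1,0,1],
    !![1,0,0; 0,1,1; 0,0,0],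
    !![1,0,1; 0,1,0; 0,0,0],
    !![0,-1,-1; 0,1,0; 0,0,1],
    !![1,0,0; -1,0,-1; 0,0,1],
    !![1,0,0; 0,0,0; 0,1,1],
    !![1,0,0; 0,0,0; 0,0,1],
    !![1,1,1; 0,1,0; 0,-1,0],
    !![1,0,0; 0,0,-1; 0,0,1]]

/-- The invariant finite set of integer vectors (vertices / points of the
invariant polytope together with the origin). -/
def V : List (Fin 3 → ℤ) :=
  [![-1,-1,1], ![-1,0,0], ![-1,0,1], ![-1,1,0], ![0,-1,0], ![0,-1,1],
   ![0,0,-1], ![0,0,0], ![0,0,1], ![0,1,-1], ![0,1,0], ![1,-1,0],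
   ![1,0,-1], ![1,0,0], ![1,1,-1]]

lemma V_invariant : ∀ v ∈ V, ∀ n : Fin 12, (Gz n).mulVec v ∈ V := by decide

lemma V_bounded : ∀ v ∈ V, ∀ i : Fin 3, |v i| ≤ 1 := by decide

lemma prod_mulVec_mem (L : List (Fin 12)) (v : Fin 3 → ℤ) (hv : v ∈ V) :
    ((L.map Gz).prod).mulVec v ∈ V := by
  induction L with
  | nil => simpa using hv
  | cons n L ih =>
      have : ((n :: L).map Gz).prod = Gz n * (L.map Gz).prod := by simp
      rw [this, ← Matrix.mulVec_mulVec]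
      exact V_invariant _ ih n

lemma G_eq_cast (n : Fin 12) : G n = (Int.castRingHom ℝ).mapMatrix (Gz n) := by
  ext i j
  fin_cases n <;> fin_cases i <;> fin_cases j <;>
    norm_num [G, Gz, Matrix.map]

lemma prod_cast (L : List (Fin 12)) :
    (L.map G).prod = (Int.castRingHom ℝ).mapMatrix ((L.map Gz).prod) := by
  have hG : G = ⇑(Int.castRingHom ℝ).mapMatrix ∘ Gz := funext G_eq_cast
  rw [hG, ← List.map_map, map_list_prod]

lemma entry_bound (L : List (Fin 12)) (i j : Fin 3) :
    |((L.map Gz).prod) i j| ≤ 1 := by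
  have hej : (Pi.single j 1 : Fin 3 → ℤ) ∈ V := by
    fin_cases j <;> · show _ ∈ V; decide
  have h := prod_mulVec_mem L _ hej
  have h2 := V_bounded _ h i
  simpa using h2

theorem products_of_G_uniformly_bounded :
    ∃ C : ℝ, ∀ L : List (Fin 12), ∀ i j : Fin 3, |((L.map G).prod) i j| ≤ C := by
  refine ⟨1, fun L i j => ?_⟩
  rw [prod_cast]
  have h := entry_bound L i j
  have : ((L.map G).prod) i j = (((L.map Gz).prod) i j : ℝ) := by
    rw [prod_cast]; simp [Matrix.map]
  calc |((Int.castRingHom ℝ).mapMatrix ((L.map Gz).prod)) i j|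
      = |(((L.map Gz).prod i j : ℤ) : ℝ)| := by simp [Matrix.map]
    _ = ((|((L.map Gz).prod i j)| : ℤ) : ℝ) := by push_cast; rfl
    _ ≤ 1 := by exact_mod_cast h
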